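/- Let D ⊂ ℂⁿ be a domain, Φ₂ a plurisubharmonic function on D with Φ₂ ≢ -∞, and let D'' ⊂⊂ D' ⊂⊂ D be relatively compact open subsets such that there exists s₀ > 0 with ∫_{D'} e^{-sΦ₂} < +∞ for all s ∈ [0, s₀). Then there exists a constant C₃ > 0, independent of the function, such that for every holomorphic function G on D and every z ∈ D'', |G(z)|² ≤ C₃ ∫_{D'} |G|² e^{Φ₂}. -/

import Mathlib

open MeasureTheory Complex Set Filter

noncomputable section

/-- The "positive part" of an extended real, as an extended nonnegative real. -/
def erealPosPart (x : EReal) : ENNReal :=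
  if x = ⊤ then ⊤ else ENNReal.ofReal x.toReal

/-- The (upper-part minus lower-part) integral of an `EReal`-valued function. -/
def erealIntegral {α : Type*} [MeasurableSpace α] (μ : Measure α) (f : α → EReal) : EReal :=
  ((∫⁻ x, erealPosPart (f x) ∂μ : ENNReal) : EReal) -
    ((∫⁻ x, erealPosPart (-(f x)) ∂μ : ENNReal) : EReal)

/-- `u : D → [-∞,∞)` is plurisubharmonic on `D ⊆ ℂⁿ`: it is upper semicontinuous on `D`,
not identically `-∞` near any point of `D`, and satisfies the sub-mean value inequality on
every closed complex disc contained in `D`. -/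
def PlurisubharmonicOn {n : ℕ} (u : (Fin n → ℂ) → EReal) (D : Set (Fin n → ℂ)) : Prop :=
  UpperSemicontinuousOn u D ∧
  (∀ z ∈ D, ∀ V ∈ nhds z, ∃ w ∈ V ∩ D, u w ≠ ⊥) ∧
  ∀ z ∈ D, ∀ w : Fin n → ℂ, ∀ r : ℝ, 0 < r →
    (∀ l : ℂ, ‖l‖ ≤ r → z + l • w ∈ D) →
    u z ≤ (((2 * Real.pi)⁻¹ : ℝ) : EReal) *
      erealIntegral (volume.restrict (Set.Ioc (0:ℝ) (2 * Real.pi)))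
        (fun θ : ℝ => u (z + ((r : ℂ) * Complex.exp (θ * Complex.I)) • w))

/-- A pseudoconvex domain in `ℂⁿ`: a nonempty connected open set admitting a continuous
plurisubharmonic exhaustion function. -/
def IsPseudoconvexDomain {n : ℕ} (D : Set (Fin n → ℂ)) : Prop :=
  IsOpen D ∧ IsConnected D ∧
  ∃ u : (Fin n → ℂ) → ℝ, ContinuousOn u D ∧
    PlurisubharmonicOn (fun z => ((u z : ℝ) : EReal)) D ∧
    ∀ c : ℝ, IsCompact {z | z ∈ D ∧ u z ≤ c}

/-- `∫_A |F|² e^{-w}`, valued in `[0,∞]`. -/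
def wtInt {n : ℕ} (A : Set (Fin n → ℂ)) (F : (Fin n → ℂ) → ℂ) (w : (Fin n → ℂ) → EReal) :
    ENNReal :=
  ∫⁻ z in A, (‖F z‖₊ : ENNReal) ^ 2 * EReal.exp (-(w z))

/-- `∫_A |F|^p e^{-w}`, valued in `[0,∞]`. -/
def wtIntP {n : ℕ} (A : Set (Fin n → ℂ)) (F : (Fin n → ℂ) → ℂ) (p : ℝ)
    (w : (Fin n → ℂ) → EReal) : ENNReal :=
  ∫⁻ z in A, (‖F z‖₊ : ENNReal) ^ p * EReal.exp (-(w z))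

/-- The germ `(f,o)` belongs to the multiplier ideal `I(w)_o`: `f` is holomorphic and
`|f|² e^{-w}` is integrable on some neighborhood of `o` contained in `D`. -/
def MemMultIdeal {n : ℕ} (D : Set (Fin n → ℂ)) (w : (Fin n → ℂ) → EReal) (o : Fin n → ℂ)
    (f : (Fin n → ℂ) → ℂ) : Prop :=
  ∃ U, IsOpen U ∧ o ∈ U ∧ U ⊆ D ∧ DifferentiableOn ℂ f U ∧ wtInt U f w < ⊤

/-- The germ `(f,o)` belongs to `I₊(w)_o := ⋃_{q>1} I(q·w)_o`. -/
def MemMultIdealPlus {n : ℕ} (D : Set (Fin n → ℂ)) (w : (Fin n → ℂ) → EReal) (o : Fin n → ℂ)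
    (f : (Fin n → ℂ) → ℂ) : Prop :=
  ∃ q : ℝ, 1 < q ∧ MemMultIdeal D (fun z => (q : EReal) * w z) o f

/-- The jumping number `c_o^F(φ) = sup{c ≥ 0 : |F|² e^{-2cφ} is L¹ near o}`, in `[0,∞]`. -/
def jumpNum {n : ℕ} (D : Set (Fin n → ℂ)) (F : (Fin n → ℂ) → ℂ) (φ : (Fin n → ℂ) → EReal)
    (o : Fin n → ℂ) : ENNReal :=
  sSup {c : ENNReal | ∃ U, IsOpen U ∧ o ∈ U ∧ U ⊆ D ∧
    wtInt U F (fun z => ((2 * c : ENNReal) : EReal) * φ z) < ⊤}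

/-- The jumping number `c_{o,p}^F(φ) = sup{c ≥ 0 : |F|^p e^{-2cφ} is L¹ near o}`, in `[0,∞]`. -/
def jumpNumP {n : ℕ} (D : Set (Fin n → ℂ)) (F : (Fin n → ℂ) → ℂ) (p : ℝ)
    (φ : (Fin n → ℂ) → EReal) (o : Fin n → ℂ) : ENNReal :=
  sSup {c : ENNReal | ∃ U, IsOpen U ∧ o ∈ U ∧ U ⊆ D ∧
    wtIntP U F p (fun z => ((2 * c : ENNReal) : EReal) * φ z) < ⊤}

/-- `K_{φ,F}(o) = 1 / inf{∫_D |F̃|² : (F̃-F,o) ∈ I₊(2 c_o^F(φ) φ)_o, F̃ ∈ O(D)}`. -/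
def Kphi {n : ℕ} (D : Set (Fin n → ℂ)) (F : (Fin n → ℂ) → ℂ) (φ : (Fin n → ℂ) → EReal)
    (o : Fin n → ℂ) : ENNReal :=
  (sInf {I : ENNReal | ∃ G : (Fin n → ℂ) → ℂ, DifferentiableOn ℂ G D ∧
    MemMultIdealPlus D (fun z => ((2 * jumpNum D F φ o : ENNReal) : EReal) * φ z) o
      (fun z => G z - F z) ∧
    I = ∫⁻ z in D, (‖G z‖₊ : ENNReal) ^ 2})⁻¹

/-- `F₁ := F^{⌈p/2⌉}`. -/
def Fpow {n : ℕ} (F : (Fin n → ℂ) → ℂ) (p : ℝ) : (Fin n → ℂ) → ℂ :=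
  fun z => F z ^ (⌈p / 2⌉₊ : ℕ)

/-- `φ₁ := (2⌈p/2⌉ - p) log|F|`. -/
def phiOne {n : ℕ} (F : (Fin n → ℂ) → ℂ) (p : ℝ) : (Fin n → ℂ) → EReal :=
  fun z => ((2 * (⌈p / 2⌉₊ : ℝ) - p : ℝ) : EReal) * ENNReal.log (‖F z‖₊ : ENNReal)

/-- `K^{(p)}_{φ,F,a}(o) = 1 / inf{∫_D |F̃|² e^{-φ₁-(1-a)φ} :
(F̃-F₁,o) ∈ I(φ₁ + 2 c_{o,p}^F(φ) φ)_o, F̃ ∈ O(D)}`. -/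
def Kp {n : ℕ} (D : Set (Fin n → ℂ)) (F : (Fin n → ℂ) → ℂ) (φ : (Fin n → ℂ) → EReal)
    (o : Fin n → ℂ) (p a : ℝ) : ENNReal :=
  (sInf {I : ENNReal | ∃ G : (Fin n → ℂ) → ℂ, DifferentiableOn ℂ G D ∧
    MemMultIdeal D
      (fun z => phiOne F p z + ((2 * jumpNumP D F p φ o : ENNReal) : EReal) * φ z) o
      (fun z => G z - Fpow F p z) ∧
    I = wtInt D G (fun z => phiOne F p z + ((1 - a : ℝ) : EReal) * φ z)})⁻¹

/-- `K^{(2)}_{φ,F,a}(o) = 1 / inf{∫_D |F̃|² e^{-(1-a)φ} :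
(F̃-F,o) ∈ I(2 c_o^F(φ) φ)_o, F̃ ∈ O(D)}`. -/
def K2 {n : ℕ} (D : Set (Fin n → ℂ)) (F : (Fin n → ℂ) → ℂ) (φ : (Fin n → ℂ) → EReal)
    (o : Fin n → ℂ) (a : ℝ) : ENNReal :=
  (sInf {I : ENNReal | ∃ G : (Fin n → ℂ) → ℂ, DifferentiableOn ℂ G D ∧
    MemMultIdeal D (fun z => ((2 * jumpNum D F φ o : ENNReal) : EReal) * φ z) o
      (fun z => G z - F z) ∧
    I = wtInt D G (fun z => ((1 - a : ℝ) : EReal) * φ z)})⁻¹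

/-- The weighted Bergman kernel `K_{D,w}(o) = 1 / inf{∫_D |f|² e^{-w} : f ∈ O(D), f(o) = 1}`. -/
def Kbergman {n : ℕ} (D : Set (Fin n → ℂ)) (w : (Fin n → ℂ) → EReal) (o : Fin n → ℂ) :
    ENNReal :=
  (sInf {I : ENNReal | ∃ f : (Fin n → ℂ) → ℂ, DifferentiableOn ℂ f D ∧ f o = 1 ∧
    I = wtInt D f w})⁻¹

/-- `C_{F,I,Φ₁-Φ₂}(D) = inf{∫_D |F̃|² e^{-Φ₁+Φ₂} : (F̃-F,o) ∈ I, F̃ ∈ O(D)}`, where membership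
of the germ at `o` in `I` is expressed by the predicate `I` on representatives. -/
def Cinf {n : ℕ} (D : Set (Fin n → ℂ)) (F : (Fin n → ℂ) → ℂ)
    (I : ((Fin n → ℂ) → ℂ) → Prop) (Φ₁ Φ₂ : (Fin n → ℂ) → EReal) : ENNReal :=
  sInf {c : ENNReal | ∃ G : (Fin n → ℂ) → ℂ, DifferentiableOn ℂ G D ∧
    I (fun z => G z - F z) ∧
    c = ∫⁻ z in D, (‖G z‖₊ : ENNReal) ^ 2 * EReal.exp (-(Φ₁ z) + Φ₂ z)}

/-- The set whose supremum is `c_o^F(φ'; ψ) = sup{c ≥ 0 : |F|² e^{-φ'-(2c-1)ψ} is L¹ near o}`. -/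
def jumpSetRel {n : ℕ} (D : Set (Fin n → ℂ)) (F : (Fin n → ℂ) → ℂ)
    (φ' ψ : (Fin n → ℂ) → EReal) (o : Fin n → ℂ) : Set ℝ :=
  {c : ℝ | 0 ≤ c ∧ ∃ U, IsOpen U ∧ o ∈ U ∧ U ⊆ D ∧
    (∫⁻ z in U, (‖F z‖₊ : ENNReal) ^ 2 *
      EReal.exp (-(φ' z) - ((2 * c - 1 : ℝ) : EReal) * ψ z)) < ⊤}

/-- `I` is (the membership predicate, on representatives, of) an ideal of the local ring `O_o`
of germs of holomorphic functions at `o`. -/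
structure IsIdealGermAt {n : ℕ} (o : Fin n → ℂ) (I : ((Fin n → ℂ) → ℂ) → Prop) : Prop where
  congr : ∀ f g : (Fin n → ℂ) → ℂ, I f → f =ᶠ[nhds o] g → I g
  analyticAt : ∀ f : (Fin n → ℂ) → ℂ, I f → AnalyticAt ℂ f o
  zero_mem : I 0
  add_mem : ∀ f g : (Fin n → ℂ) → ℂ, I f → I g → I (f + g)
  smul_mem : ∀ f g : (Fin n → ℂ) → ℂ, AnalyticAt ℂ f o → I g → I (f * g)

/-! Hölder's inequality with exponents `1/r` and `1/(1-r)` gives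
`∫ |G|^{2r} ≤ (∫ |G|² e^{Φ₂})^r (∫ e^{-sΦ₂})^{1-r}` with `s = r/(1-r) < s₀`, so it suffices to bound
`|G(z)|^{2r}`, for `z ∈ D''`, by a constant multiple of `∫_{D'} |G|^{2r}`.

Instead of the plurisubharmonicity of `|G|^p` (`p = 2r ≤ 1`) we only use the sub-mean-value
property of `|G|` on polydiscs, which follows from the Cauchy formula in each variable, together
with a maximum trick. Let `d` be the distance to the complement of `D'`, `β = 2n/p`, and let `z₀`
maximize `d^β |G|` on the closure of `D'`. On the polydisc of radius `t = d(z₀)/2` about `z₀` we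
have `d ≥ t`, hence `|G| ≤ 2^β |G(z₀)|`, hence `|G| ≤ |G|^p (2^β |G(z₀)|)^{1-p}`. Averaging over the
polydisc and cancelling `|G(z₀)|^{1-p}` gives `(π t²)^n |G(z₀)|^p ≲ ∫_{D'} |G|^p`; since `β p = 2n`
this reads `d(z₀)^{2n} |G(z₀)|^p ≲ ∫_{D'} |G|^p`, which by maximality bounds `d^{2n} |G|^p`
everywhere, and `d` is bounded below on `D''`. -/

open Metric Real
open scoped ENNReal

theorem UpperSemicontinuousOn.aemeasurable {α β : Type*} [TopologicalSpace α] [MeasurableSpace α]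
    [OpensMeasurableSpace α] [TopologicalSpace β] [LinearOrder β] [OrderTopology β]
    [SecondCountableTopology β] [MeasurableSpace β] [BorelSpace β] {f : α → β} {s : Set α}
    (hf : UpperSemicontinuousOn f s) (hs : MeasurableSet s) {μ : Measure α} :
    AEMeasurable f (μ.restrict s) :=
  aemeasurable_restrict_of_measurable_subtype hs
    (upperSemicontinuousOn_iff_restrict.2 hf).measurable

theorem EReal.exp_neg_coe_mul {s : ℝ} (hs : 0 < s) (x : EReal) :
    EReal.exp (-(s * x)) = EReal.exp x ^ (-s) := by
  induction x with
  | bot => simp [EReal.coe_mul_bot_of_pos hs, ENNReal.zero_rpow_of_neg (neg_neg_of_pos hs)]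
  | top => simp [EReal.coe_mul_top_of_pos hs, ENNReal.top_rpow_of_neg (neg_neg_of_pos hs)]
  | coe x =>
    rw [← EReal.coe_mul, ← EReal.coe_neg, EReal.exp_coe, EReal.exp_coe,
      ENNReal.ofReal_rpow_of_pos (Real.exp_pos x), ← Real.exp_mul]
    ring_nf

theorem lintegral_rpow_le_weighted {α : Type*} [MeasurableSpace α] {μ : Measure α}
    {f u : α → ℝ≥0∞} (hf : AEMeasurable f μ) (hu : AEMeasurable u μ) {r : ℝ} (hr0 : 0 < r)
    (hr1 : r < 1) (hfu : ∫⁻ x, f x ^ 2 * u x ∂μ ≠ ⊤)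
    (hu' : ∫⁻ x, u x ^ (-(r / (1 - r))) ∂μ ≠ ⊤) :
    ∫⁻ x, f x ^ (2 * r) ∂μ ≤
      (∫⁻ x, f x ^ 2 * u x ∂μ) ^ r * (∫⁻ x, u x ^ (-(r / (1 - r))) ∂μ) ^ (1 - r) := by
  have h1r : 0 < 1 - r := sub_pos.2 hr1
  have hpt : ∀ᵐ x ∂μ, f x ^ (2 * r) ≤
      (f x ^ 2 * u x) ^ r * (u x ^ (-(r / (1 - r)))) ^ (1 - r) := by
    filter_upwards [ae_lt_top' (by fun_prop : AEMeasurable (fun x => f x ^ 2 * u x) μ) hfu,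
      ae_lt_top' (hu.pow_const _) hu'] with x hfux hux
    have hu0 : u x ≠ 0 := by
      rintro h
      rw [h, ENNReal.zero_rpow_of_neg (neg_neg_of_pos (div_pos hr0 h1r))] at hux
      exact hux.ne rfl
    rcases eq_or_ne (u x) ⊤ with htop | htop
    · have : f x = 0 := by
        by_contra h
        rw [htop, ENNReal.mul_top (pow_ne_zero 2 h)] at hfux
        exact hfux.ne rfl
      simp [this, ENNReal.zero_rpow_of_pos (by positivity : (0:ℝ) < 2 * r)]
    · have hexp : r + -(r / (1 - r)) * (1 - r) = 0 := by field_simp; ring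
      rw [ENNReal.mul_rpow_of_nonneg _ _ hr0.le, ← ENNReal.rpow_natCast, ← ENNReal.rpow_mul,
        ← ENNReal.rpow_mul, mul_assoc, ← ENNReal.rpow_add _ _ hu0 htop, hexp, ENNReal.rpow_zero,
        mul_one, Nat.cast_ofNat]
  calc ∫⁻ x, f x ^ (2 * r) ∂μ
      ≤ ∫⁻ x, (f x ^ 2 * u x) ^ r * (u x ^ (-(r / (1 - r)))) ^ (1 - r) ∂μ := lintegral_mono_ae hpt
    _ ≤ (∫⁻ x, ((f x ^ 2 * u x) ^ r) ^ (1 / r) ∂μ) ^ (1 / (1 / r)) *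
          (∫⁻ x, ((u x ^ (-(r / (1 - r)))) ^ (1 - r)) ^ (1 / (1 - r)) ∂μ) ^ (1 / (1 / (1 - r))) :=
        ENNReal.lintegral_mul_le_Lp_mul_Lq μ (Real.holderConjugate_one_div hr0 h1r (by ring))
          (by fun_prop) (by fun_prop)
    _ = _ := by
        simp only [← ENNReal.rpow_mul, one_div_one_div, mul_one_div_cancel hr0.ne', mul_assoc,
          mul_one_div_cancel h1r.ne', mul_one, ENNReal.rpow_one]

theorem ofReal_two_pi_mul_enorm_le_lintegral_circleMap {g : ℂ → ℂ} {c : ℂ} {u : ℝ}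
    (hg : DifferentiableOn ℂ g (closedBall c u)) (hu : 0 < u) :
    ENNReal.ofReal (2 * π) * ‖g c‖ₑ ≤ ∫⁻ θ in Ioo (-π) π, ‖g (circleMap c u θ)‖ₑ := by
  set f : ℝ → ℂ := fun θ => g (circleMap c u θ)
  have hf : Continuous f :=
    hg.continuousOn.comp_continuous (continuous_circleMap c u)
      fun θ => circleMap_mem_closedBall c hu.le θ
  have hmean : circleAverage g c u = g c := by
    refine DiffContOnCl.circleAverage ⟨hg.mono ?_, ?_⟩ <;> rw [abs_of_pos hu]
    · exact ball_subset_closedBall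
    · rw [closure_ball c hu.ne']; exact hg.continuousOn
  have hle : 2 * π * ‖g c‖ ≤ ∫ θ in 0..2 * π, ‖f θ‖ := by
    rw [← hmean, circleAverage_def, norm_smul, norm_inv, Real.norm_of_nonneg two_pi_pos.le,
      mul_inv_cancel_left₀ two_pi_pos.ne']
    exact intervalIntegral.norm_integral_le_integral_norm two_pi_pos.le
  have hshift : ∫ θ in 0..2 * π, ‖f θ‖ = ∫ θ in -π..π, ‖f θ‖ := by
    have hper : Function.Periodic (fun θ => ‖f θ‖) (2 * π) := fun θ => by
      simp [f, periodic_circleMap c u θ]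
    rw [← zero_add (2 * π), hper.intervalIntegral_add_eq 0 (-π)]
    ring_nf
  calc ENNReal.ofReal (2 * π) * ‖g c‖ₑ = ENNReal.ofReal (2 * π * ‖g c‖) := by
        rw [ENNReal.ofReal_mul two_pi_pos.le, ofReal_norm]
    _ ≤ ENNReal.ofReal (∫ θ in Ioc (-π) π, ‖f θ‖) := by
        rw [← intervalIntegral.integral_of_le (by linarith [pi_pos]), ← hshift]
        exact ENNReal.ofReal_le_ofReal hle
    _ = ∫⁻ θ in Ioo (-π) π, ‖f θ‖ₑ := by
        rw [ofReal_integral_norm_eq_lintegral_enorm (hf.integrableOn_Ioc),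
          setLIntegral_congr Ioo_ae_eq_Ioc]

theorem lintegral_polar_le_setLIntegral_closedBall (c : ℂ) (t : ℝ) {F : ℂ → ℝ≥0∞}
    (hF : Measurable F) :
    ∫⁻ u in Ioc 0 t, ∫⁻ θ in Ioo (-π) π, ENNReal.ofReal u * F (circleMap c u θ) ≤
      ∫⁻ w in closedBall c t, F w := by
  set F' := (closedBall c t).indicator F
  have hpolar (p : ℝ × ℝ) : c + Complex.polarCoord.symm p = circleMap c p.1 p.2 := by
    rw [Complex.polarCoord_symm_apply, circleMap, Complex.exp_mul_I]
    push_cast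
    ring
  have hmeas :
      Measurable fun p : ℝ × ℝ => ENNReal.ofReal p.1 • F' (c + Complex.polarCoord.symm p) :=
    measurable_fst.ennreal_ofReal.mul ((hF.indicator measurableSet_closedBall).comp
      (by simp_rw [hpolar]; fun_prop))
  have hF' : ∀ u ∈ Ioc 0 t, ∀ θ, F (circleMap c u θ) = F' (c + Complex.polarCoord.symm (u, θ)) :=
    fun u hu θ => by
      rw [hpolar]
      exact (indicator_of_mem (closedBall_subset_closedBall hu.2
        (circleMap_mem_closedBall c hu.1.le θ)) F).symm
  calc ∫⁻ u in Ioc 0 t, ∫⁻ θ in Ioo (-π) π, ENNReal.ofReal u * F (circleMap c u θ)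
      = ∫⁻ p in Ioc 0 t ×ˢ Ioo (-π) π, ENNReal.ofReal p.1 • F' (c + Complex.polarCoord.symm p) := by
        rw [Measure.volume_eq_prod, ← Measure.prod_restrict, lintegral_prod _ hmeas.aemeasurable]
        refine setLIntegral_congr_fun measurableSet_Ioc fun u hu => ?_
        simp_rw [hF' u hu, smul_eq_mul]
    _ ≤ ∫⁻ p in polarCoord.target, ENNReal.ofReal p.1 • F' (c + Complex.polarCoord.symm p) :=
        lintegral_mono_set (prod_mono Ioc_subset_Ioi_self subset_rfl)
    _ = ∫⁻ w in closedBall c t, F w := by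
        rw [Complex.lintegral_comp_polarCoord_symm (fun w => F' (c + w)),
          lintegral_add_left_eq_self F' c, lintegral_indicator measurableSet_closedBall]

theorem ofReal_pi_mul_sq_mul_le_setLIntegral_closedBall {g : ℂ → ℂ} {c : ℂ} {t : ℝ}
    (hg : DifferentiableOn ℂ g (closedBall c t)) (ht : 0 < t) {C : ℝ≥0∞} {F : ℂ → ℝ≥0∞}
    (hF : Measurable F) (hgF : ∀ w ∈ closedBall c t, C * ‖g w‖ₑ ≤ F w) :
    ENNReal.ofReal (π * t ^ 2) * (C * ‖g c‖ₑ) ≤ ∫⁻ w in closedBall c t, F w := by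
  set K := C * (ENNReal.ofReal (2 * π) * ‖g c‖ₑ) with hK
  have hcircle : ∀ u ∈ Ioc 0 t, ENNReal.ofReal u * K ≤
      ∫⁻ θ in Ioo (-π) π, ENNReal.ofReal u * F (circleMap c u θ) := by
    intro u hu
    have hsub : closedBall c u ⊆ closedBall c t := closedBall_subset_closedBall hu.2
    have hmem (θ : ℝ) : circleMap c u θ ∈ closedBall c t :=
      hsub (circleMap_mem_closedBall c hu.1.le θ)
    have hcont : Continuous fun θ => g (circleMap c u θ) :=
      (hg.mono hsub).continuousOn.comp_continuous (continuous_circleMap c u)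
        fun θ => circleMap_mem_closedBall c hu.1.le θ
    calc ENNReal.ofReal u * K
        ≤ ENNReal.ofReal u * C * ∫⁻ θ in Ioo (-π) π, ‖g (circleMap c u θ)‖ₑ := by
          rw [hK, mul_assoc]
          gcongr
          exact ofReal_two_pi_mul_enorm_le_lintegral_circleMap (hg.mono hsub) hu.1
      _ = ∫⁻ θ in Ioo (-π) π, ENNReal.ofReal u * (C * ‖g (circleMap c u θ)‖ₑ) := by
          simp_rw [← lintegral_const_mul'' _ hcont.enorm.aemeasurable, mul_assoc]
      _ ≤ _ := lintegral_mono fun θ => by gcongr; exact hgF _ (hmem θ)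
  have hrad : ∫⁻ u in Ioc 0 t, ENNReal.ofReal u = ENNReal.ofReal (t ^ 2 / 2) := by
    have hint : IntegrableOn (fun u : ℝ => u) (Ioc 0 t) := continuous_id.integrableOn_Ioc
    have hnonneg : 0 ≤ᵐ[volume.restrict (Ioc 0 t)] fun u : ℝ => u :=
      (ae_restrict_iff' measurableSet_Ioc).2 (Eventually.of_forall fun u hu => hu.1.le)
    rw [← ofReal_integral_eq_lintegral_ofReal hint hnonneg,
      ← intervalIntegral.integral_of_le ht.le, integral_id]
    ring_nf
  calc ENNReal.ofReal (π * t ^ 2) * (C * ‖g c‖ₑ) = ENNReal.ofReal (t ^ 2 / 2) * K := by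
        rw [hK, show π * t ^ 2 = t ^ 2 / 2 * (2 * π) by ring, ENNReal.ofReal_mul (by positivity)]
        ring
    _ = ∫⁻ u in Ioc 0 t, ENNReal.ofReal u * K := by
        rw [lintegral_mul_const'' _
          (by fun_prop : Measurable fun u : ℝ => ENNReal.ofReal u).aemeasurable, hrad]
    _ ≤ ∫⁻ u in Ioc 0 t, ∫⁻ θ in Ioo (-π) π, ENNReal.ofReal u * F (circleMap c u θ) :=
        setLIntegral_mono' measurableSet_Ioc hcircle
    _ ≤ ∫⁻ w in closedBall c t, F w := lintegral_polar_le_setLIntegral_closedBall c t hF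

theorem setLIntegral_closedBall_fin_succ {n : ℕ} (z : Fin (n + 1) → ℂ) {t : ℝ} (ht : 0 ≤ t)
    {F : (Fin (n + 1) → ℂ) → ℝ≥0∞} (hF : Measurable F) :
    ∫⁻ w in closedBall z t, F w =
      ∫⁻ x in closedBall (z 0) t, ∫⁻ y in closedBall (Fin.tail z) t, F (Fin.cons x y) := by
  set e := MeasurableEquiv.piFinSuccAbove (fun _ : Fin (n + 1) => ℂ) 0
  have hpi {m : ℕ} (z' : Fin m → ℂ) : volume.restrict (closedBall z' t) =
      Measure.pi fun i => volume.restrict (closedBall (z' i) t) := by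
    rw [closedBall_pi z' ht, volume_pi, Measure.restrict_pi_pi]
  have he (q : ℂ × (Fin n → ℂ)) : e.symm q = Fin.cons q.1 q.2 := by
    simp [e, MeasurableEquiv.piFinSuccAbove, Fin.consEquiv]
  rw [hpi, ← ((measurePreserving_piFinSuccAbove _ 0).symm e).lintegral_comp_emb
      e.symm.measurableEmbedding,
    lintegral_prod (fun q => F (e.symm q)) (hF.comp e.symm.measurable).aemeasurable, hpi]
  simp_rw [he, Fin.succAbove_zero]
  rfl

theorem ofReal_pi_mul_sq_pow_mul_le_setLIntegral_closedBall {n : ℕ} {G : (Fin n → ℂ) → ℂ}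
    {z : Fin n → ℂ} {t : ℝ} (hG : DifferentiableOn ℂ G (closedBall z t)) (ht : 0 < t)
    {C : ℝ≥0∞} {F : (Fin n → ℂ) → ℝ≥0∞} (hF : Measurable F)
    (hGF : ∀ w ∈ closedBall z t, C * ‖G w‖ₑ ≤ F w) :
    ENNReal.ofReal (π * t ^ 2) ^ n * (C * ‖G z‖ₑ) ≤ ∫⁻ w in closedBall z t, F w := by
  induction n generalizing C with
  | zero =>
    rw [pow_zero, one_mul, Subsingleton.eq_univ_of_nonempty ⟨z, mem_closedBall_self ht.le⟩,
      Measure.restrict_univ, volume_pi, Measure.pi_of_empty (x := z), lintegral_dirac]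
    exact hGF z (mem_closedBall_self ht.le)
  | succ n ih =>
    have hcons {x y} (hx : x ∈ closedBall (z 0) t) (hy : y ∈ closedBall (Fin.tail z) t) :
        (Fin.cons x y : Fin (n + 1) → ℂ) ∈ closedBall z t := by
      rw [mem_closedBall, dist_pi_le_iff ht.le] at hy ⊢
      exact Fin.cases hx hy
    have hslice : ∀ x ∈ closedBall (z 0) t,
        ENNReal.ofReal (π * t ^ 2) ^ n * (C * ‖G (Fin.cons x (Fin.tail z))‖ₑ) ≤
          ∫⁻ y in closedBall (Fin.tail z) t, F (Fin.cons x y) := fun x hx =>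
      ih (hG.comp (by fun_prop) fun y hy => hcons hx hy) (hF.comp (by fun_prop))
        fun y hy => hGF _ (hcons hx hy)
    have hcenter : Fin.tail z ∈ closedBall (Fin.tail z) t := mem_closedBall_self ht.le
    calc ENNReal.ofReal (π * t ^ 2) ^ (n + 1) * (C * ‖G z‖ₑ)
        = ENNReal.ofReal (π * t ^ 2) *
            ((ENNReal.ofReal (π * t ^ 2) ^ n * C) * ‖G (Fin.cons (z 0) (Fin.tail z))‖ₑ) := by
          rw [Fin.cons_self_tail]; ring
      _ ≤ ∫⁻ x in closedBall (z 0) t, ∫⁻ y in closedBall (Fin.tail z) t, F (Fin.cons x y) := by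
          refine ofReal_pi_mul_sq_mul_le_setLIntegral_closedBall
            (hG.comp (by fun_prop) fun x hx => hcons hx hcenter) ht ?_ fun x hx => ?_
          · exact Measurable.lintegral_prod_right'
              (ν := volume.restrict (closedBall (Fin.tail z) t))
              (f := fun q : ℂ × (Fin n → ℂ) => F (Fin.cons q.1 q.2)) (hF.comp (by fun_prop))
          · rw [mul_assoc]; exact hslice x hx
      _ = ∫⁻ w in closedBall z t, F w := (setLIntegral_closedBall_fin_succ z ht.le hF).symm

theorem ofReal_pi_mul_sq_pow_mul_enorm_rpow_le {n : ℕ} {G : (Fin n → ℂ) → ℂ}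
    {z : Fin n → ℂ} {t : ℝ} (hG : DifferentiableOn ℂ G (closedBall z t)) (ht : 0 < t)
    {p : ℝ} (hp0 : 0 < p) (hp1 : p ≤ 1) {K : ℝ≥0∞}
    (hGK : ∀ w ∈ closedBall z t, ‖G w‖ₑ ≤ K * ‖G z‖ₑ) :
    ENNReal.ofReal (π * t ^ 2) ^ n * ‖G z‖ₑ ^ p ≤
      K ^ (1 - p) * ∫⁻ w in closedBall z t, ‖G w‖ₑ ^ p := by
  classical
  set g := ‖G z‖ₑ
  rcases eq_or_ne g 0 with hg | hg
  · simp [hg, ENNReal.zero_rpow_of_pos hp0]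
  have hq : 0 ≤ 1 - p := sub_nonneg.2 hp1
  set F := (closedBall z t).indicator fun w => ‖G w‖ₑ ^ p
  have hF : Measurable F :=
    ((ENNReal.continuous_rpow_const.comp_continuousOn hG.continuousOn.enorm).measurable_piecewise
      continuousOn_const measurableSet_closedBall)
  have hFw : ∀ w ∈ closedBall z t, F w = ‖G w‖ₑ ^ p := fun w hw => indicator_of_mem hw _
  have hsplit (x : ℝ≥0∞) : x = x ^ p * x ^ (1 - p) := by
    rw [← ENNReal.rpow_add_of_nonneg _ _ hp0.le hq, add_sub_cancel, ENNReal.rpow_one]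
  have hmean : ENNReal.ofReal (π * t ^ 2) ^ n * (1 * g) ≤
      ∫⁻ w in closedBall z t, (K * g) ^ (1 - p) * F w := by
    refine ofReal_pi_mul_sq_pow_mul_le_setLIntegral_closedBall hG ht (hF.const_mul _)
      fun w hw => ?_
    rw [one_mul, hFw w hw, mul_comm]
    conv_lhs => rw [hsplit ‖G w‖ₑ]
    gcongr
    exact hGK w hw
  rw [one_mul, lintegral_const_mul _ hF, setLIntegral_congr_fun measurableSet_closedBall hFw,
    ENNReal.mul_rpow_of_nonneg _ _ hq] at hmean
  nth_rw 1 [hsplit g] at hmean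
  have hg0 : g ^ (1 - p) ≠ 0 := (ENNReal.rpow_pos (pos_iff_ne_zero.2 hg) enorm_ne_top).ne'
  have hgtop : g ^ (1 - p) ≠ ⊤ := ENNReal.rpow_ne_top_of_nonneg hq enorm_ne_top
  refine (ENNReal.mul_le_mul_iff_left hg0 hgtop).1 ?_
  calc _ = _ := by ring
    _ ≤ _ := hmean
    _ = _ := by ring

theorem half_infDist_le_infDist_of_mem_closedBall {α : Type*} [PseudoMetricSpace α] {s : Set α}
    {z w : α} (hw : w ∈ closedBall z (infDist z s / 2)) : infDist z s / 2 ≤ infDist w s := by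
  have := infDist_le_infDist_add_dist (x := z) (y := w) (s := s)
  rw [mem_closedBall, dist_comm] at hw
  linarith

theorem ofReal_mul_infDist_compl_pow_mul_enorm_rpow_le_of_isMaxOn {n : ℕ} (hn : 0 < n)
    {U : Set (Fin n → ℂ)} {G : (Fin n → ℂ) → ℂ} (hG : DifferentiableOn ℂ G (closure U))
    {p : ℝ} (hp0 : 0 < p) (hp1 : p ≤ 1) {z₀ : Fin n → ℂ}
    (hmax : IsMaxOn (fun w => infDist w Uᶜ ^ (2 * n / p) * ‖G w‖) (closure U) z₀) :
    ENNReal.ofReal (π ^ n / 2 ^ (2 * n / p) * infDist z₀ Uᶜ ^ (2 * n)) * ‖G z₀‖ₑ ^ p ≤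
      ∫⁻ w in U, ‖G w‖ₑ ^ p := by
  set β : ℝ := 2 * n / p
  have hβp : β * p = 2 * n := div_mul_cancel₀ _ hp0.ne'
  rcases (infDist_nonneg (x := z₀) (s := Uᶜ)).eq_or_lt with hd | hd
  · simp [← hd, hn.ne']
  set t := infDist z₀ Uᶜ / 2
  have ht : 0 < t := half_pos hd
  have hdt (w) (hw : w ∈ closedBall z₀ t) : t ≤ infDist w Uᶜ :=
    half_infDist_le_infDist_of_mem_closedBall hw
  have hball : closedBall z₀ t ⊆ U := fun w hw => by
    by_contra h
    linarith [hdt w hw, infDist_zero_of_mem (s := Uᶜ) h]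
  have hK : ∀ w ∈ closedBall z₀ t, ‖G w‖ₑ ≤ ENNReal.ofReal (2 ^ β) * ‖G z₀‖ₑ := fun w hw => by
    have h : t ^ β * ‖G w‖ ≤ t ^ β * (2 ^ β * ‖G z₀‖) := calc
      t ^ β * ‖G w‖ ≤ infDist w Uᶜ ^ β * ‖G w‖ := by gcongr; exact hdt w hw
      _ ≤ infDist z₀ Uᶜ ^ β * ‖G z₀‖ := hmax (subset_closure (hball hw))
      _ = t ^ β * (2 ^ β * ‖G z₀‖) := by
          rw [show infDist z₀ Uᶜ = 2 * t by ring, mul_rpow zero_le_two ht.le]; ring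
    rw [← ofReal_norm, ← ofReal_norm, ← ENNReal.ofReal_mul (by positivity)]
    exact ENNReal.ofReal_le_ofReal (le_of_mul_le_mul_left h (by positivity))
  have hconst : ENNReal.ofReal (π ^ n / 2 ^ β * infDist z₀ Uᶜ ^ (2 * n)) *
      ENNReal.ofReal (2 ^ β) ^ (1 - p) = ENNReal.ofReal (π * t ^ 2) ^ n := by
    have h2 : ((2 : ℝ) ^ β) ^ (1 - p) = 2 ^ β / 2 ^ (2 * n) := by
      rw [← rpow_mul zero_le_two, mul_one_sub, hβp, rpow_sub zero_lt_two]
      norm_cast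
    rw [ENNReal.ofReal_rpow_of_nonneg (by positivity) (sub_nonneg.2 hp1),
      ← ENNReal.ofReal_mul (by positivity), ← ENNReal.ofReal_pow (by positivity), h2,
      show infDist z₀ Uᶜ = 2 * t by ring]
    congr 1
    field_simp
    rw [mul_pow, pow_mul, pow_mul]
    ring
  have hX0 : ENNReal.ofReal (2 ^ β) ^ (1 - p) ≠ 0 := by positivity
  have hXtop : ENNReal.ofReal (2 ^ β) ^ (1 - p) ≠ ⊤ :=
    ENNReal.rpow_ne_top_of_nonneg (sub_nonneg.2 hp1) ENNReal.ofReal_ne_top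
  refine (ENNReal.mul_le_mul_iff_left hX0 hXtop).1 ?_
  calc _ = ENNReal.ofReal (π * t ^ 2) ^ n * ‖G z₀‖ₑ ^ p := by rw [mul_right_comm, hconst]
    _ ≤ ENNReal.ofReal (2 ^ β) ^ (1 - p) * ∫⁻ w in closedBall z₀ t, ‖G w‖ₑ ^ p :=
        ofReal_pi_mul_sq_pow_mul_enorm_rpow_le (hG.mono (hball.trans subset_closure)) ht hp0 hp1 hK
    _ ≤ _ := by rw [mul_comm]; gcongr

theorem ofReal_mul_infDist_compl_pow_mul_enorm_rpow_le {n : ℕ} (hn : 0 < n)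
    {U : Set (Fin n → ℂ)} (hUc : IsCompact (closure U)) {G : (Fin n → ℂ) → ℂ}
    (hG : DifferentiableOn ℂ G (closure U)) {p : ℝ} (hp0 : 0 < p) (hp1 : p ≤ 1)
    {z : Fin n → ℂ} (hz : z ∈ closure U) :
    ENNReal.ofReal (π ^ n / 2 ^ (2 * n / p) * infDist z Uᶜ ^ (2 * n)) * ‖G z‖ₑ ^ p ≤
      ∫⁻ w in U, ‖G w‖ₑ ^ p := by
  set β : ℝ := 2 * n / p
  have hc : 0 ≤ π ^ n / 2 ^ β := by positivity
  have hweight (w) : ENNReal.ofReal (π ^ n / 2 ^ β * infDist w Uᶜ ^ (2 * n)) * ‖G w‖ₑ ^ p =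
      ENNReal.ofReal (π ^ n / 2 ^ β * (infDist w Uᶜ ^ β * ‖G w‖) ^ p) := by
    rw [← ofReal_norm, ENNReal.ofReal_rpow_of_nonneg (norm_nonneg _) hp0.le,
      ← ENNReal.ofReal_mul (mul_nonneg hc (pow_nonneg infDist_nonneg _)), mul_assoc,
      mul_rpow (rpow_nonneg infDist_nonneg _) (norm_nonneg _),
      ← rpow_mul infDist_nonneg, div_mul_cancel₀ _ hp0.ne']
    norm_cast
  have hcont : ContinuousOn (fun w => infDist w Uᶜ ^ β * ‖G w‖) (closure U) :=
    ((continuous_infDist_pt Uᶜ).rpow_const fun _ => Or.inr (by positivity)).continuousOn.mul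
      hG.continuousOn.norm
  obtain ⟨z₀, -, hmax⟩ := hUc.exists_isMaxOn ⟨z, hz⟩ hcont
  calc _ = ENNReal.ofReal (π ^ n / 2 ^ β * (infDist z Uᶜ ^ β * ‖G z‖) ^ p) := hweight z
    _ ≤ ENNReal.ofReal (π ^ n / 2 ^ β * (infDist z₀ Uᶜ ^ β * ‖G z₀‖) ^ p) := by
        gcongr ENNReal.ofReal (_ * ?_)
        exact rpow_le_rpow (mul_nonneg (rpow_nonneg infDist_nonneg _) (norm_nonneg _)) (hmax hz)
          hp0.le
    _ = _ := (hweight z₀).symm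
    _ ≤ _ := ofReal_mul_infDist_compl_pow_mul_enorm_rpow_le_of_isMaxOn hn hG hp0 hp1 hmax

theorem exists_pos_mul_enorm_rpow_le_setLIntegral {n : ℕ} {U K : Set (Fin n → ℂ)}
    (hU : IsOpen U) (hUc : IsCompact (closure U)) (hK : IsCompact K) (hKU : K ⊆ U)
    {p : ℝ} (hp0 : 0 < p) (hp1 : p ≤ 1) :
    ∃ c : ℝ, 0 < c ∧ ∀ G : (Fin n → ℂ) → ℂ, DifferentiableOn ℂ G (closure U) →
      ∀ z ∈ K, ENNReal.ofReal c * ‖G z‖ₑ ^ p ≤ ∫⁻ w in U, ‖G w‖ₑ ^ p := by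
  rcases n.eq_zero_or_pos with rfl | hn
  · refine ⟨1, one_pos, fun G _ z hz => ?_⟩
    rw [Subsingleton.eq_univ_of_nonempty ⟨z, hKU hz⟩, Measure.restrict_univ, volume_pi,
      Measure.pi_of_empty (x := z), lintegral_dirac, ENNReal.ofReal_one, one_mul]
  have hUc' : Uᶜ.Nonempty := by
    have : Nonempty (Fin n) := ⟨⟨0, hn⟩⟩
    rw [nonempty_compl]
    rintro rfl
    rw [closure_univ] at hUc
    exact NormedSpace.unbounded_univ ℂ (Fin n → ℂ) hUc.isBounded
  obtain ⟨δ, hδ, hδK⟩ := hK.exists_cthickening_subset_open hU hKU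
  have hδU : ∀ z ∈ K, δ ≤ infDist z Uᶜ := fun z hz => (le_infDist hUc').2 fun y hy => by
    by_contra! h
    exact hy (hδK (mem_cthickening_of_dist_le y z δ K hz (dist_comm z y ▸ h.le)))
  refine ⟨π ^ n / 2 ^ (2 * n / p) * δ ^ (2 * n), by positivity, fun G hG z hz =>
    le_trans ?_ (ofReal_mul_infDist_compl_pow_mul_enorm_rpow_le hn hUc hG hp0 hp1
      (subset_closure (hKU hz)))⟩
  gcongr
  exact hδU z hz

theorem exists_enorm_sq_le_mul_setLIntegral {n : ℕ} {U K : Set (Fin n → ℂ)}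
    (hU : IsOpen U) (hUc : IsCompact (closure U)) (hK : IsCompact K) (hKU : K ⊆ U)
    {u : (Fin n → ℂ) → ℝ≥0∞} (hu : AEMeasurable u (volume.restrict U)) {r : ℝ} (hr0 : 0 < r)
    (hr1 : r ≤ 1 / 2) (hur : ∫⁻ w in U, u w ^ (-(r / (1 - r))) ≠ ⊤) :
    ∃ C : ℝ, 0 < C ∧ ∀ G : (Fin n → ℂ) → ℂ, DifferentiableOn ℂ G (closure U) →
      ∀ z ∈ K, ‖G z‖ₑ ^ 2 ≤ ENNReal.ofReal C * ∫⁻ w in U, ‖G w‖ₑ ^ 2 * u w := by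
  obtain ⟨c, hc, hmean⟩ := exists_pos_mul_enorm_rpow_le_setLIntegral hU hUc hK hKU
    (p := 2 * r) (by positivity) (by linarith)
  have hc0 : ENNReal.ofReal c ≠ 0 := (ENNReal.ofReal_pos.2 hc).ne'
  set M := ∫⁻ w in U, u w ^ (-(r / (1 - r)))
  set A : ℝ≥0∞ := (ENNReal.ofReal c)⁻¹ ^ (1 / r) * M ^ ((1 - r) / r)
  have hA : A ≠ ⊤ := ENNReal.mul_ne_top
    (ENNReal.rpow_ne_top_of_nonneg (by positivity) (ENNReal.inv_ne_top.2 hc0))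
    (ENNReal.rpow_ne_top_of_nonneg (div_nonneg (by linarith) hr0.le) hur)
  refine ⟨A.toReal + 1, by positivity, fun G hG z hz => ?_⟩
  set J := ∫⁻ w in U, ‖G w‖ₑ ^ 2 * u w
  rcases eq_or_ne J ⊤ with hJ | hJ
  · rw [hJ, ENNReal.mul_top (by positivity)]
    exact le_top
  have hGU : AEMeasurable (fun w => ‖G w‖ₑ) (volume.restrict U) :=
    ((hG.continuousOn.mono subset_closure).aemeasurable hU.measurableSet).enorm
  have hz' : ‖G z‖ₑ ^ (2 * r) ≤ (ENNReal.ofReal c)⁻¹ * (J ^ r * M ^ (1 - r)) :=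
    (ENNReal.mul_le_iff_le_inv hc0 ENNReal.ofReal_ne_top).1 <|
      (hmean G hG z hz).trans (lintegral_rpow_le_weighted hGU hu hr0 (by linarith) hJ hur)
  calc ‖G z‖ₑ ^ 2 = (‖G z‖ₑ ^ (2 * r)) ^ (1 / r) := by
        rw [← ENNReal.rpow_mul, mul_assoc, mul_one_div_cancel hr0.ne', mul_one, ENNReal.rpow_two]
    _ ≤ ((ENNReal.ofReal c)⁻¹ * (J ^ r * M ^ (1 - r))) ^ (1 / r) := by gcongr
    _ = A * J := by
        rw [ENNReal.mul_rpow_of_nonneg _ _ (by positivity),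
          ENNReal.mul_rpow_of_nonneg _ _ (by positivity), ← ENNReal.rpow_mul, ← ENNReal.rpow_mul,
          mul_one_div_cancel hr0.ne', ENNReal.rpow_one, mul_one_div (1 - r)]
        ring
    _ ≤ ENNReal.ofReal (A.toReal + 1) * J := by
        gcongr
        exact (ENNReal.le_ofReal_iff_toReal_le hA (by positivity)).2 (by linarith)

theorem pointwise_estimate_general
    {n : ℕ} (D D' D'' : Set (Fin n → ℂ)) (Φ₂ : (Fin n → ℂ) → EReal)
    (hΦ₂ : PlurisubharmonicOn Φ₂ D)
    (hD' : IsOpen D')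
    (hD'c : IsCompact (closure D')) (hD''c : IsCompact (closure D''))
    (hsub1 : closure D'' ⊆ D') (hsub2 : closure D' ⊆ D)
    (hs : ∃ s₀ : ℝ, 0 < s₀ ∧ ∀ s : ℝ, 0 ≤ s → s < s₀ →
      (∫⁻ z in D', EReal.exp (-(((s : ℝ) : EReal) * Φ₂ z))) < ⊤) :
    ∃ C₃ : ℝ, 0 < C₃ ∧ ∀ G : (Fin n → ℂ) → ℂ, DifferentiableOn ℂ G D →
      ∀ z ∈ D'', (‖G z‖₊ : ENNReal) ^ 2 ≤
        ENNReal.ofReal C₃ * ∫⁻ w in D', (‖G w‖₊ : ENNReal) ^ 2 * EReal.exp (Φ₂ w) := by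
  obtain ⟨s₀, hs₀, hint⟩ := hs
  set r : ℝ := min (s₀ / 4) (1 / 2)
  have hr0 : 0 < r := by positivity
  have hr1 : r ≤ 1 / 2 := min_le_right _ _
  have hs : 0 < r / (1 - r) := div_pos hr0 (by linarith)
  have hrs : r / (1 - r) < s₀ := by
    rw [div_lt_iff₀ (by linarith)]
    nlinarith [min_le_left (s₀ / 4) (1 / 2)]
  have hΦ : AEMeasurable (fun w => EReal.exp (Φ₂ w)) (volume.restrict D') :=
    EReal.exp_monotone.measurable.comp_aemeasurable
      ((hΦ₂.1.mono (subset_closure.trans hsub2)).aemeasurable hD'.measurableSet)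
  have hM : ∫⁻ w in D', EReal.exp (Φ₂ w) ^ (-(r / (1 - r))) ≠ ⊤ := by
    simp_rw [← EReal.exp_neg_coe_mul hs]
    exact (hint _ hs.le hrs).ne
  obtain ⟨C, hC, hG⟩ := exists_enorm_sq_le_mul_setLIntegral hD' hD'c hD''c hsub1 hΦ hr0 hr1 hM
  exact ⟨C, hC, fun G hGD z hz => hG G (hGD.mono hsub2) z (subset_closure hz)⟩

/-- The pointwise estimate of the Appendix: on `D'' ⊂⊂ D' ⊂⊂ D`, if `e^{-sΦ₂}` is integrable
on `D'` for all small `s ≥ 0`, then `|G(z)|² ≤ C₃ ∫_{D'} |G|² e^{Φ₂}` for all `G ∈ O(D)` and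
`z ∈ D''`. -/
theorem pointwise_estimate
    {n : ℕ} (D D' D'' : Set (Fin n → ℂ)) (Φ₂ : (Fin n → ℂ) → EReal)
    (hD : IsOpen D) (hDc : IsConnected D)
    (hΦ₂ : PlurisubharmonicOn Φ₂ D) (hΦ₂ne : ∃ z ∈ D, Φ₂ z ≠ ⊥)
    (hD' : IsOpen D') (hD'' : IsOpen D'')
    (hD'c : IsCompact (closure D')) (hD''c : IsCompact (closure D''))
    (hsub1 : closure D'' ⊆ D') (hsub2 : closure D' ⊆ D)
    (hs : ∃ s₀ : ℝ, 0 < s₀ ∧ ∀ s : ℝ, 0 ≤ s → s < s₀ →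
      (∫⁻ z in D', EReal.exp (-(((s : ℝ) : EReal) * Φ₂ z))) < ⊤) :
    ∃ C₃ : ℝ, 0 < C₃ ∧ ∀ G : (Fin n → ℂ) → ℂ, DifferentiableOn ℂ G D →
      ∀ z ∈ D'', (‖G z‖₊ : ENNReal) ^ 2 ≤
        ENNReal.ofReal C₃ * ∫⁻ w in D', (‖G w‖₊ : ENNReal) ^ 2 * EReal.exp (Φ₂ w) :=
  pointwise_estimate_general D D' D'' Φ₂ hΦ₂ hD' hD'c hD''c hsub1 hsub2 hs
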